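/- Let K be a field of characteristic zero and g a K-algebra whose multiplication [ , ] is skew-symmetric ([x,y] = −[y,x] for all x,y). Let a, b : ℤ → g be distributions forming a local pair. Then a and b satisfy conformal skew-symmetry: for every r ∈ ℕ and every t ∈ ℤ, (a_r b)_t = (−1)^{r+1} Σ_{i≥0} (t choose i) (b_{r+i} a)_{t−i}, where the sum is finite because b_{r+i} a = 0 for all large i by locality. (Equivalently, a_r b = Σ_{i≥0} (−1)^{r+1+i} ∂_z^{(i)}(b_{r+i} a).) -/

import Mathlib

/-!
For fixed `T` put `F_T p = [b_p, a_{T-p}]`. By skew-symmetry, locality of order `n` says that the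
`n`-th forward difference of every `F_T` vanishes identically; `(b_m a)_w` is the `m`-th forward
difference of `F_{m+w}` at `0`, and `(a_r b)_t` is `-(-1)^r` times the `r`-th forward difference
of `F_{r+t}` at `t`. Conformal skew-symmetry is then Newton's forward-difference formula
`f t = Σ_i (t choose i) Δ^i f 0`, which holds at every integer `t` as soon as some `Δ^n f`
vanishes, applied to `f = Δ^r F_{r+t}`.
-/

/-- The binomial polynomial `(t choose i) = t(t−1)⋯(t−i+1)/i!`, as an element of `K`. -/
noncomputable def binomPoly (K : Type*) [Field K] (t : ℤ) (i : ℕ) : K :=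
  (∏ k ∈ Finset.range i, ((t : K) - (k : K))) / (Nat.factorial i : K)

section

variable {K : Type*} [Field K] {g : Type*} [AddCommGroup g] [Module K g]

/-- A pair of distributions `a, b` with values in an algebra `(g, br)` is local of
order `≤ n` if `Σ_{k=0}^{n} (−1)^k (n choose k) [a_{t+n−k}, b_{s+k}] = 0` for all `t, s`. -/
def pairLocalOfOrder (br : g →ₗ[K] g →ₗ[K] g) (a b : ℤ → g) (n : ℕ) : Prop :=
  ∀ t s : ℤ, ∑ k ∈ Finset.range (n + 1),
    ((-1 : ℤ) ^ k * (n.choose k : ℤ)) • br (a (t + (n : ℤ) - (k : ℤ))) (b (s + (k : ℤ))) = 0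

/-- The `i`-th product of distributions with values in the algebra `(g, br)`:
`(a_i b)_u = Σ_{k=0}^{i} (−1)^k (i choose k) [a_{i−k}, b_{u+k}]`. -/
def distProd (br : g →ₗ[K] g →ₗ[K] g) (a b : ℤ → g) (i : ℕ) : ℤ → g :=
  fun u => ∑ k ∈ Finset.range (i + 1),
    ((-1 : ℤ) ^ k * (i.choose k : ℤ)) • br (a ((i : ℤ) - (k : ℤ))) (b (u + (k : ℤ)))

end

open Finset fwdDiff

theorem binomPoly_eq_choose (K : Type*) [Field K] [CharZero K] (t : ℤ) (i : ℕ) :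
    binomPoly K t i = ((Ring.choose t i : ℤ) : K) := by
  have h := congrArg (Int.cast : ℤ → K) (Ring.descPochhammer_eq_factorial_smul_choose t i)
  simp only [← Polynomial.eval_eq_smeval, descPochhammer_eval_eq_prod_range, nsmul_eq_mul] at h
  push_cast at h
  rw [binomPoly, h, mul_div_cancel_left₀ _ (Nat.cast_ne_zero.2 i.factorial_ne_zero)]

theorem binomPoly_smul_eq_choose_smul (K : Type*) [Field K] [CharZero K] {g : Type*}
    [AddCommGroup g] [Module K g] (t : ℤ) (i : ℕ) (x : g) :
    binomPoly K t i • x = Ring.choose t i • x := by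
  rw [binomPoly_eq_choose, Int.cast_smul_eq_zsmul]

section FwdDiff

variable {G : Type*} [AddCommGroup G]

theorem fwdDiff_iter_eq_zero_of_le {M : Type*} [AddCommMonoid M] {h : M} {f : M → G} {n m : ℕ}
    (hf : Δ_[h] ^[n] f = 0) (hnm : n ≤ m) : Δ_[h] ^[m] f = 0 := by
  obtain ⟨k, rfl⟩ := Nat.exists_eq_add_of_le' hnm
  rw [Function.iterate_add_apply, hf]
  exact Function.iterate_fixed (fwdDiff_const h (0 : G)) k

theorem Int.sum_neg_one_pow_mul_choose_smul_eq (u : ℤ → G) (m : ℕ) (s : ℤ) :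
    ∑ k ∈ Finset.range (m + 1), ((-1 : ℤ) ^ k * (m.choose k : ℤ)) • u (s + k) =
      (-1 : ℤ) ^ m • Δ_[1] ^[m] u s := by
  rw [fwdDiff_iter_eq_sum_shift, smul_sum]
  refine sum_congr rfl fun k hk ↦ ?_
  obtain ⟨j, rfl⟩ := Nat.exists_eq_add_of_le (Nat.lt_succ_iff.1 (mem_range.1 hk))
  rw [smul_smul, Nat.add_sub_cancel_left, nsmul_one, pow_add]
  ring_nf
  simp

theorem Int.fwdDiff_iter_eq_sum_reflect (u : ℤ → G) (m : ℕ) :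
    Δ_[1] ^[m] u 0 =
      ∑ k ∈ Finset.range (m + 1), ((-1 : ℤ) ^ k * (m.choose k : ℤ)) • u (m - k) := by
  rw [fwdDiff_iter_eq_sum_shift, ← sum_range_reflect]
  refine sum_congr rfl fun k hk ↦ ?_
  have hkm := Nat.lt_succ_iff.1 (mem_range.1 hk)
  rw [Nat.add_sub_cancel, Nat.sub_sub_self hkm, Nat.choose_symm hkm, nsmul_one, Nat.cast_sub hkm,
    zero_add]

theorem Int.eq_of_fwdDiff_eq {f f' : ℤ → G} (hΔ : Δ_[1] f = Δ_[1] f') (h0 : f 0 = f' 0) :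
    f = f' := by
  funext t
  induction t using Int.induction_on with
  | zero => exact h0
  | succ i ih =>
    rw [← sub_add_cancel (f _) (f i), ← sub_add_cancel (f' _) (f' i)]
    exact congrArg₂ (· + ·) (congrFun hΔ i) ih
  | pred i ih =>
    have hΔi := congrFun hΔ (-i - 1)
    simp only [fwdDiff, sub_add_cancel] at hΔi
    rw [← sub_sub_cancel (f (-i)) (f _), ← sub_sub_cancel (f' (-i)) (f' _), hΔi, ih]

theorem Int.fwdDiff_sum_choose_smul (n : ℕ) (x : ℕ → G) :
    Δ_[1] (fun t : ℤ ↦ ∑ i ∈ Finset.range (n + 1), Ring.choose t i • x i) =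
      fun t ↦ ∑ i ∈ Finset.range n, Ring.choose t i • x (i + 1) := by
  funext t
  simp only [fwdDiff, ← sum_sub_distrib, ← sub_smul]
  rw [sum_range_succ']
  simp [Ring.choose_succ_succ]

theorem Int.eq_sum_choose_smul_fwdDiff_iter {n : ℕ} {f : ℤ → G} (hf : Δ_[1] ^[n] f = 0)
    (t : ℤ) : f t = ∑ i ∈ Finset.range n, Ring.choose t i • Δ_[1] ^[i] f 0 := by
  induction n generalizing f t with
  | zero => simp_all
  | succ n ih =>
    rw [Function.iterate_succ_apply] at hf
    suffices f = fun s ↦ ∑ i ∈ Finset.range (n + 1), Ring.choose s i • Δ_[1] ^[i] f 0 from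
      congrFun this t
    refine Int.eq_of_fwdDiff_eq ?_ ?_
    · rw [Int.fwdDiff_sum_choose_smul]
      funext s
      exact ih hf s
    · simp [sum_range_succ', Ring.choose_zero_succ]

theorem Int.eq_sum_choose_smul_fwdDiff_iter_truncated {n N : ℕ} {f : ℤ → G}
    (hf : Δ_[1] ^[n] f = 0) (hN : ∀ i, N ≤ i → Δ_[1] ^[i] f 0 = 0) (t : ℤ) :
    f t = ∑ i ∈ Finset.range N, Ring.choose t i • Δ_[1] ^[i] f 0 := by
  rw [Int.eq_sum_choose_smul_fwdDiff_iter hf t]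
  rcases le_total n N with h | h
  · refine sum_subset (range_subset_range.2 h) fun i _ hi ↦ ?_
    rw [fwdDiff_iter_eq_zero_of_le hf (by simpa using hi), Pi.zero_apply, smul_zero]
  · refine (sum_subset (range_subset_range.2 h) fun i _ hi ↦ ?_).symm
    rw [hN i (by simpa using hi), smul_zero]

end FwdDiff

section Distributions

variable {K : Type*} [Field K] {g : Type*} [AddCommGroup g] [Module K g]

def diagBracket (br : g →ₗ[K] g →ₗ[K] g) (a b : ℤ → g) (T : ℤ) : ℤ → g :=
  fun p ↦ br (a p) (b (T - p))

theorem distProd_eq_fwdDiff_iter_diagBracket (br : g →ₗ[K] g →ₗ[K] g) (a b : ℤ → g) (m : ℕ)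
    (w : ℤ) : distProd br a b m w = Δ_[1] ^[m] (diagBracket br a b (m + w)) 0 := by
  rw [Int.fwdDiff_iter_eq_sum_reflect]
  refine sum_congr rfl fun k _ ↦ ?_
  rw [diagBracket, show (m : ℤ) + w - (m - k) = w + k by ring]

variable {br : g →ₗ[K] g →ₗ[K] g} (hskew : ∀ x y : g, br x y = - br y x)
include hskew

theorem distProd_eq_neg_fwdDiff_iter_diagBracket (a b : ℤ → g) (r : ℕ) (t : ℤ) :
    distProd br a b r t = -((-1 : ℤ) ^ r • Δ_[1] ^[r] (diagBracket br b a (r + t)) t) := by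
  rw [← Int.sum_neg_one_pow_mul_choose_smul_eq, distProd, ← sum_neg_distrib]
  refine sum_congr rfl fun k _ ↦ ?_
  rw [diagBracket, show (r : ℤ) + t - (t + k) = r - k by ring, hskew, smul_neg]

theorem fwdDiff_iter_diagBracket_eq_zero {a b : ℤ → g} {n : ℕ}
    (hab : pairLocalOfOrder br a b n) (T : ℤ) : Δ_[1] ^[n] (diagBracket br b a T) = 0 := by
  funext s
  have hF : ∑ k ∈ Finset.range (n + 1),
      ((-1 : ℤ) ^ k * (n.choose k : ℤ)) • diagBracket br b a T (s + k) = 0 := by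
    rw [← neg_eq_zero, ← sum_neg_distrib, ← hab (T - s - n) s]
    refine sum_congr rfl fun k _ ↦ ?_
    rw [diagBracket, hskew, smul_neg, neg_neg, show T - s - n + n - k = T - (s + k) by ring]
  rw [Int.sum_neg_one_pow_mul_choose_smul_eq] at hF
  exact (isUnit_neg_one.pow n).smul_eq_zero.1 hF

end Distributions

/-- Local pairs of distributions with values in a skew-symmetric algebra satisfy
conformal skew-symmetry: `(a_r b)_t = (−1)^{r+1} Σ_{i≥0} (t choose i) (b_{r+i} a)_{t−i}`,
where the sum is finite since `b_{r+i} a = 0` for all large `i` by locality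
(the truncation at any such bound `N` gives the value of the sum). -/
theorem local_pair_conformal_skew_symmetry
    (K : Type*) [Field K] [CharZero K]
    (g : Type*) [AddCommGroup g] [Module K g]
    (br : g →ₗ[K] g →ₗ[K] g)
    (hskew : ∀ x y : g, br x y = - br y x)
    (a b : ℤ → g)
    (hloc : ∃ n : ℕ, pairLocalOfOrder br a b n) :
    (∃ N : ℕ, ∀ m : ℕ, N ≤ m → ∀ u : ℤ, distProd br b a m u = 0) ∧
    (∀ N : ℕ, (∀ m : ℕ, N ≤ m → ∀ u : ℤ, distProd br b a m u = 0) →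
      ∀ (r : ℕ) (t : ℤ),
        distProd br a b r t =
          (-1 : ℤ) ^ (r + 1) •
            ∑ i ∈ Finset.range N, binomPoly K t i • distProd br b a (r + i) (t - (i : ℤ))) := by
  obtain ⟨n, hn⟩ := hloc
  have hF := fwdDiff_iter_diagBracket_eq_zero hskew hn
  refine ⟨⟨n, fun m hm u ↦ ?_⟩, fun N hN r t ↦ ?_⟩
  · rw [distProd_eq_fwdDiff_iter_diagBracket, fwdDiff_iter_eq_zero_of_le (hF _) hm, Pi.zero_apply]
  rw [distProd_eq_neg_fwdDiff_iter_diagBracket hskew]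
  set f := Δ_[1] ^[r] (diagBracket br b a (r + t))
  have hprod (i : ℕ) : distProd br b a (r + i) (t - i) = Δ_[1] ^[i] f 0 := by
    rw [distProd_eq_fwdDiff_iter_diagBracket, ← Function.iterate_add_apply, add_comm i r,
      show ((r + i : ℕ) : ℤ) + (t - i) = r + t by push_cast; ring]
  have hf : Δ_[1] ^[n] f = 0 := by
    rw [← Function.iterate_add_apply]
    exact fwdDiff_iter_eq_zero_of_le (hF _) (Nat.le_add_right n r)
  have hfN (i : ℕ) (hi : N ≤ i) : Δ_[1] ^[i] f 0 = 0 := by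
    rw [← hprod]
    exact hN _ (by omega) _
  rw [Int.eq_sum_choose_smul_fwdDiff_iter_truncated hf hfN t, pow_succ, mul_neg_one, neg_smul]
  simp only [hprod, binomPoly_smul_eq_choose_smul]
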